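/- Let d be a positive integer, Σ and Σ̂ d×d symmetric positive definite real matrices, A and Â d×d real matrices, b, b̂ ∈ ℝ^d, and Θ ⊆ ℝ^d. Define ℓ(θ) := A·θ − b and ℓ̂(θ) := Â·θ − b̂, set M := Σ^{−1/2}·Σ̂·Σ^{−1/2} with largest and smallest eigenvalues λmax(M) and λmin(M), and κ(M) := λmax(M)/λmin(M). Suppose θ* ∈ Θ satisfies A·θ* = b, suppose ε ≥ 0 is such that |‖Σ^{−1/2}·ℓ(θ)‖₂ − ‖Σ^{−1/2}·ℓ̂(θ)‖₂| ≤ ε for every θ ∈ Θ, and suppose θ̂ ∈ Θ satisfies ‖Σ̂^{−1/2}·ℓ̂(θ̂)‖₂ ≤ ‖Σ̂^{−1/2}·ℓ̂(θ)‖₂ for every θ ∈ Θ. Then ‖Σ^{−1/2}·ℓ(θ̂)‖₂ ≤ (1 + √(κ(M)))·ε. -/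

import Mathlib

/-!
Write `‖v‖_Σ = ‖Σ^{-1/2} v‖₂`. Rayleigh quotients of `M` on vectors `Σ^{1/2} y` give
`λmin(M) Σ ≤ Σ̂ ≤ λmax(M) Σ` in the Loewner order, and inversion reverses that order, so
`‖v‖_Σ ≤ √λmax(M) ‖v‖_Σ̂` and `‖v‖_Σ̂ ≤ λmin(M)^{-1/2} ‖v‖_Σ`. Hence
`‖ℓ(θ̂)‖_Σ ≤ ‖ℓ̂(θ̂)‖_Σ + ε ≤ √λmax ‖ℓ̂(θ̂)‖_Σ̂ + ε ≤ √λmax ‖ℓ̂(θ*)‖_Σ̂ + ε ≤ √κ ‖ℓ̂(θ*)‖_Σ + ε`,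
and `‖ℓ̂(θ*)‖_Σ ≤ ε` because `ℓ(θ*) = 0`.
-/

open Matrix MeasureTheory ProbabilityTheory
open scoped Classical

noncomputable section

/-- Euclidean norm of a vector in `ℝ^d`. -/
def norm2 {d : ℕ} (v : Fin d → ℝ) : ℝ := Real.sqrt (v ⬝ᵥ v)

/-- The positive semidefinite square root of a matrix (junk value `0` if not PSD). -/
def psdSqrt {d : ℕ} (M : Matrix (Fin d) (Fin d) ℝ) : Matrix (Fin d) (Fin d) ℝ :=
  if h : M.PosSemidef then
    (h.1.eigenvectorUnitary : Matrix (Fin d) (Fin d) ℝ) *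
      diagonal ((↑) ∘ (fun i => Real.sqrt (h.1.eigenvalues i))) *
      (star h.1.eigenvectorUnitary : Matrix (Fin d) (Fin d) ℝ)
  else 0

/-- Largest eigenvalue of a symmetric matrix (junk value `0` if not symmetric). -/
def lamMax {d : ℕ} (M : Matrix (Fin d) (Fin d) ℝ) : ℝ :=
  if h : M.IsHermitian then ⨆ i, h.eigenvalues i else 0

/-- Smallest eigenvalue of a symmetric matrix (junk value `0` if not symmetric). -/
def lamMin {d : ℕ} (M : Matrix (Fin d) (Fin d) ℝ) : ℝ :=
  if h : M.IsHermitian then ⨅ i, h.eigenvalues i else 0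

/-- Smallest singular value. -/
def sigmaMin {d : ℕ} (M : Matrix (Fin d) (Fin d) ℝ) : ℝ := Real.sqrt (lamMin (Mᵀ * M))

/-- Largest singular value (operator norm). -/
def sigmaMax {d : ℕ} (M : Matrix (Fin d) (Fin d) ℝ) : ℝ := Real.sqrt (lamMax (Mᵀ * M))

/-- Empirical covariance matrix `(1/n) ∑ᵢ WᵢWᵢᵀ`. -/
def empSigma {d n : ℕ} (W : Fin n → Fin d → ℝ) : Matrix (Fin d) (Fin d) ℝ :=
  (n : ℝ)⁻¹ • ∑ i, vecMulVec (W i) (W i)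

/-- Empirical LSTDQ matrix `(1/n) ∑ᵢ Wᵢ(Wᵢ - γWᵢ')ᵀ`. -/
def empA {d n : ℕ} (γ : ℝ) (W W' : Fin n → Fin d → ℝ) : Matrix (Fin d) (Fin d) ℝ :=
  (n : ℝ)⁻¹ • ∑ i, vecMulVec (W i) (W i - γ • W' i)

/-- Empirical LSTDQ vector `(1/n) ∑ᵢ RᵢWᵢ`. -/
def empb {d n : ℕ} (W : Fin n → Fin d → ℝ) (R : Fin n → ℝ) : Fin d → ℝ :=
  (n : ℝ)⁻¹ • ∑ i, R i • W i

lemma Matrix.mulVec_dotProduct_mulVec_self {m n : Type*} [Fintype m] [Fintype n]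
    (H : Matrix m n ℝ) (v : n → ℝ) : (H *ᵥ v) ⬝ᵥ (H *ᵥ v) = v ⬝ᵥ ((Hᵀ * H) *ᵥ v) := by
  rw [← mulVec_mulVec, dotProduct_mulVec v, vecMul_transpose]

section Spectral

variable {n : Type*} [Fintype n] [DecidableEq n]

lemma Matrix.dotProduct_star_mulVec_self {U : Matrix n n ℝ} (hU : U ∈ unitaryGroup n ℝ)
    (x : n → ℝ) : (star U *ᵥ x) ⬝ᵥ (star U *ᵥ x) = x ⬝ᵥ x := by
  have hU' := mem_unitaryGroup_iff.mp hU
  rw [star_eq_conjTranspose, conjTranspose_eq_transpose_of_trivial] at hU' ⊢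
  rw [dotProduct_mulVec, vecMul_mulVec, transpose_transpose, hU', vecMul_one]

lemma Matrix.IsHermitian.dotProduct_mulVec_eq_sum {A : Matrix n n ℝ} (hA : A.IsHermitian)
    (x : n → ℝ) :
    x ⬝ᵥ (A *ᵥ x) =
      ∑ i, hA.eigenvalues i * (star (hA.eigenvectorUnitary : Matrix n n ℝ) *ᵥ x) i ^ 2 := by
  conv_lhs => rw [hA.spectral_theorem, Unitary.conjStarAlgAut_apply]
  rw [← mulVec_mulVec, ← mulVec_mulVec, dotProduct_mulVec, ← mulVec_transpose]
  simp only [dotProduct, mulVec_diagonal, star_eq_conjTranspose,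
    conjTranspose_eq_transpose_of_trivial, Function.comp_apply, RCLike.ofReal_real_eq_id, id]
  exact Finset.sum_congr rfl fun i _ => by ring

end Spectral

section Loewner

variable {n : Type*} [Fintype n] [DecidableEq n]

lemma Matrix.mulVec_nonsing_inv_mulVec {Q : Matrix n n ℝ} (hQ : IsUnit Q.det) (x : n → ℝ) :
    Q *ᵥ (Q⁻¹ *ᵥ x) = x := by
  rw [mulVec_mulVec, mul_nonsing_inv Q hQ, one_mulVec]

/-- Inversion is antitone for the Loewner order. -/
lemma Matrix.dotProduct_inv_mulVec_le {P Q : Matrix n n ℝ} (hP : P.PosDef) (hQ : IsUnit Q.det)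
    {c : ℝ} (hc : 0 < c) (h : ∀ y, y ⬝ᵥ (P *ᵥ y) ≤ c * (y ⬝ᵥ (Q *ᵥ y))) (x : n → ℝ) :
    x ⬝ᵥ (Q⁻¹ *ᵥ x) ≤ c * (x ⬝ᵥ (P⁻¹ *ᵥ x)) := by
  set y := Q⁻¹ *ᵥ x
  set z := P⁻¹ *ᵥ x
  have hPz : P *ᵥ z = x := mulVec_nonsing_inv_mulVec (isUnit_iff_ne_zero.mpr hP.det_pos.ne') x
  have hQy : Q *ᵥ y = x := mulVec_nonsing_inv_mulVec hQ x
  have hPy : z ⬝ᵥ (P *ᵥ y) = x ⬝ᵥ y := by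
    rw [dotProduct_mulVec, ← mulVec_transpose, (isHermitian_iff_isSymm.mp hP.1).eq, hPz]
  have hy : y ⬝ᵥ (P *ᵥ y) ≤ c * (x ⬝ᵥ y) := by
    simpa only [hQy, dotProduct_comm y x] using h y
  have hsq : 0 ≤ (y - c • z) ⬝ᵥ (P *ᵥ (y - c • z)) := by
    simpa using hP.posSemidef.dotProduct_mulVec_nonneg (y - c • z)
  simp only [mulVec_sub, mulVec_smul, hPz, dotProduct_sub, sub_dotProduct, dotProduct_smul,
    smul_dotProduct, hPy, smul_eq_mul] at hsq
  rw [dotProduct_comm y x, dotProduct_comm z x] at hsq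
  have : 0 ≤ c * (c * (x ⬝ᵥ z) - x ⬝ᵥ y) := by linarith
  linarith [(mul_nonneg_iff_of_pos_left hc).mp this]

end Loewner

section Rayleigh

variable {d : ℕ} {A : Matrix (Fin d) (Fin d) ℝ}

lemma dotProduct_mulVec_le_lamMax (hA : A.IsHermitian) (x : Fin d → ℝ) :
    x ⬝ᵥ (A *ᵥ x) ≤ lamMax A * (x ⬝ᵥ x) := by
  rw [lamMax, dif_pos hA, hA.dotProduct_mulVec_eq_sum,
    ← dotProduct_star_mulVec_self hA.eigenvectorUnitary.2 x, dotProduct, Finset.mul_sum]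
  refine Finset.sum_le_sum fun i _ => ?_
  rw [← sq]
  exact mul_le_mul_of_nonneg_right (le_ciSup (Finite.bddAbove_range _) i) (sq_nonneg _)

lemma lamMin_mul_le_dotProduct_mulVec (hA : A.IsHermitian) (x : Fin d → ℝ) :
    lamMin A * (x ⬝ᵥ x) ≤ x ⬝ᵥ (A *ᵥ x) := by
  rw [lamMin, dif_pos hA, hA.dotProduct_mulVec_eq_sum,
    ← dotProduct_star_mulVec_self hA.eigenvectorUnitary.2 x, dotProduct, Finset.mul_sum]
  refine Finset.sum_le_sum fun i _ => ?_
  rw [← sq]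
  exact mul_le_mul_of_nonneg_right (ciInf_le (Finite.bddBelow_range _) i) (sq_nonneg _)

lemma lamMin_pos (hd : 0 < d) (hA : A.PosDef) : 0 < lamMin A := by
  have : Nonempty (Fin d) := ⟨⟨0, hd⟩⟩
  rw [lamMin, dif_pos hA.1]
  obtain ⟨i, hi⟩ := Finite.exists_min hA.1.eigenvalues
  exact (hA.eigenvalues_pos i).trans_le (le_ciInf hi)

lemma lamMax_pos (hd : 0 < d) (hA : A.PosDef) : 0 < lamMax A := by
  rw [lamMax, dif_pos hA.1]
  exact (hA.eigenvalues_pos ⟨0, hd⟩).trans_le (le_ciSup (Finite.bddAbove_range _) _)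

end Rayleigh

section Sqrt

variable {d : ℕ} {S : Matrix (Fin d) (Fin d) ℝ}

lemma psdSqrt_isSymm (h : S.PosSemidef) : (psdSqrt S).IsSymm := by
  rw [IsSymm, psdSqrt, dif_pos h, transpose_mul, transpose_mul, diagonal_transpose, mul_assoc]
  simp only [star_eq_conjTranspose, conjTranspose_eq_transpose_of_trivial, transpose_transpose]

lemma psdSqrt_mul_self (h : S.PosSemidef) : psdSqrt S * psdSqrt S = S := by
  conv_rhs => rw [h.1.spectral_theorem, Unitary.conjStarAlgAut_apply]
  rw [psdSqrt, dif_pos h]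
  simp only [mul_assoc]
  rw [← mul_assoc _ (h.1.eigenvectorUnitary : Matrix (Fin d) (Fin d) ℝ),
    Unitary.star_mul_self_of_mem h.1.eigenvectorUnitary.2, one_mul,
    ← mul_assoc (diagonal _), diagonal_mul_diagonal]
  congr 3
  funext i
  simp [Real.mul_self_sqrt (h.eigenvalues_nonneg i)]

end Sqrt

def whitenedCov {d : ℕ} (Sig B : Matrix (Fin d) (Fin d) ℝ) : Matrix (Fin d) (Fin d) ℝ :=
  (psdSqrt Sig)⁻¹ * B * (psdSqrt Sig)⁻¹

section Whitening

variable {d : ℕ} {Sig B : Matrix (Fin d) (Fin d) ℝ}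

lemma isUnit_det_psdSqrt (h : Sig.PosDef) : IsUnit (psdSqrt Sig).det := by
  refine isUnit_of_mul_isUnit_left (y := (psdSqrt Sig).det) ?_
  rw [← det_mul, psdSqrt_mul_self h.posSemidef]
  exact isUnit_iff_ne_zero.mpr h.det_pos.ne'

lemma transpose_inv_psdSqrt (h : Sig.PosSemidef) : ((psdSqrt Sig)⁻¹)ᵀ = (psdSqrt Sig)⁻¹ := by
  rw [transpose_nonsing_inv, (psdSqrt_isSymm h).eq]

lemma norm2_inv_psdSqrt_mulVec (h : Sig.PosSemidef) (v : Fin d → ℝ) :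
    norm2 ((psdSqrt Sig)⁻¹ *ᵥ v) = √(v ⬝ᵥ (Sig⁻¹ *ᵥ v)) := by
  rw [norm2, mulVec_dotProduct_mulVec_self, transpose_inv_psdSqrt h, ← Matrix.mul_inv_rev,
    psdSqrt_mul_self h]

lemma dotProduct_psdSqrt_mulVec (h : Sig.PosSemidef) (y : Fin d → ℝ) :
    (psdSqrt Sig *ᵥ y) ⬝ᵥ (psdSqrt Sig *ᵥ y) = y ⬝ᵥ (Sig *ᵥ y) := by
  rw [mulVec_dotProduct_mulVec_self, (psdSqrt_isSymm h).eq, psdSqrt_mul_self h]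

lemma dotProduct_mulVec_whitenedCov (h : Sig.PosDef) (y : Fin d → ℝ) :
    (psdSqrt Sig *ᵥ y) ⬝ᵥ (whitenedCov Sig B *ᵥ (psdSqrt Sig *ᵥ y)) = y ⬝ᵥ (B *ᵥ y) := by
  have hcancel : (psdSqrt Sig)⁻¹ *ᵥ (psdSqrt Sig *ᵥ y) = y := by
    rw [mulVec_mulVec, nonsing_inv_mul _ (isUnit_det_psdSqrt h), one_mulVec]
  rw [whitenedCov, ← mulVec_mulVec, ← mulVec_mulVec, hcancel, dotProduct_mulVec,
    ← mulVec_transpose, transpose_inv_psdSqrt h.posSemidef, hcancel]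

lemma whitenedCov_isHermitian (h : Sig.PosSemidef) (hB : B.IsHermitian) :
    (whitenedCov Sig B).IsHermitian := by
  have := isHermitian_conjTranspose_mul_mul (psdSqrt Sig)⁻¹ hB
  rwa [conjTranspose_eq_transpose_of_trivial, transpose_inv_psdSqrt h] at this

lemma whitenedCov_posDef (h : Sig.PosDef) (hB : B.PosDef) : (whitenedCov Sig B).PosDef := by
  have hinj : Function.Injective (psdSqrt Sig)⁻¹.mulVec := mulVec_injective_iff_isUnit.mpr <|
    isUnit_nonsing_inv_iff.mpr <| (isUnit_iff_isUnit_det _).mpr (isUnit_det_psdSqrt h)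
  have := hB.conjTranspose_mul_mul_same hinj
  rwa [conjTranspose_eq_transpose_of_trivial, transpose_inv_psdSqrt h.posSemidef] at this

lemma dotProduct_mulVec_le_lamMax_whitenedCov (hSig : Sig.PosDef) (hB : B.IsHermitian)
    (y : Fin d → ℝ) : y ⬝ᵥ (B *ᵥ y) ≤ lamMax (whitenedCov Sig B) * (y ⬝ᵥ (Sig *ᵥ y)) := by
  simpa only [dotProduct_mulVec_whitenedCov hSig, dotProduct_psdSqrt_mulVec hSig.posSemidef] using
    dotProduct_mulVec_le_lamMax (whitenedCov_isHermitian hSig.posSemidef hB) (psdSqrt Sig *ᵥ y)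

lemma lamMin_whitenedCov_mul_le_dotProduct_mulVec (hSig : Sig.PosDef) (hB : B.IsHermitian)
    (y : Fin d → ℝ) : lamMin (whitenedCov Sig B) * (y ⬝ᵥ (Sig *ᵥ y)) ≤ y ⬝ᵥ (B *ᵥ y) := by
  simpa only [dotProduct_mulVec_whitenedCov hSig, dotProduct_psdSqrt_mulVec hSig.posSemidef] using
    lamMin_mul_le_dotProduct_mulVec (whitenedCov_isHermitian hSig.posSemidef hB)
      (psdSqrt Sig *ᵥ y)

variable {Sighat : Matrix (Fin d) (Fin d) ℝ}

lemma norm2_inv_psdSqrt_mulVec_le_sqrt_lamMax_mul (hd : 0 < d) (hSig : Sig.PosDef)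
    (hSighat : Sighat.PosDef) (v : Fin d → ℝ) :
    norm2 ((psdSqrt Sig)⁻¹ *ᵥ v) ≤
      √(lamMax (whitenedCov Sig Sighat)) * norm2 ((psdSqrt Sighat)⁻¹ *ᵥ v) := by
  have hpos := lamMax_pos hd (whitenedCov_posDef hSig hSighat)
  rw [norm2_inv_psdSqrt_mulVec hSig.posSemidef, norm2_inv_psdSqrt_mulVec hSighat.posSemidef,
    ← Real.sqrt_mul hpos.le]
  exact Real.sqrt_le_sqrt <| dotProduct_inv_mulVec_le hSighat
    (isUnit_iff_ne_zero.mpr hSig.det_pos.ne') hpos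
    (dotProduct_mulVec_le_lamMax_whitenedCov hSig hSighat.1) v

lemma norm2_inv_psdSqrt_mulVec_le_sqrt_inv_lamMin_mul (hd : 0 < d) (hSig : Sig.PosDef)
    (hSighat : Sighat.PosDef) (v : Fin d → ℝ) :
    norm2 ((psdSqrt Sighat)⁻¹ *ᵥ v) ≤
      √(lamMin (whitenedCov Sig Sighat))⁻¹ * norm2 ((psdSqrt Sig)⁻¹ *ᵥ v) := by
  have hpos := lamMin_pos hd (whitenedCov_posDef hSig hSighat)
  rw [norm2_inv_psdSqrt_mulVec hSig.posSemidef, norm2_inv_psdSqrt_mulVec hSighat.posSemidef,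
    ← Real.sqrt_mul (inv_nonneg.mpr hpos.le)]
  exact Real.sqrt_le_sqrt <| dotProduct_inv_mulVec_le hSig
    (isUnit_iff_ne_zero.mpr hSighat.det_pos.ne') (inv_pos.mpr hpos)
    (fun y => (le_inv_mul_iff₀ hpos).mpr
      (lamMin_whitenedCov_mul_le_dotProduct_mulVec hSig hSighat.1 y)) v

end Whitening

lemma oracle_inequality {α : Type*} {Θ : Set α} {L Lhat Ltil : α → ℝ} {θstar θhat : α}
    {a b ε : ℝ} (ha : 0 ≤ a) (hb : 0 ≤ b) (hθstar : θstar ∈ Θ) (hLθstar : L θstar = 0)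
    (hdev : ∀ θ ∈ Θ, |L θ - Lhat θ| ≤ ε) (hθhat : θhat ∈ Θ)
    (hmin : ∀ θ ∈ Θ, Ltil θhat ≤ Ltil θ)
    (hLhat : ∀ θ, Lhat θ ≤ a * Ltil θ) (hLtil : ∀ θ, Ltil θ ≤ b * Lhat θ) :
    L θhat ≤ (1 + a * b) * ε := by
  have hstar : Lhat θstar ≤ ε := by
    simpa [hLθstar] using (abs_le.mp (hdev θstar hθstar)).1
  calc L θhat ≤ Lhat θhat + ε := by linarith [(abs_le.mp (hdev θhat hθhat)).2]
    _ ≤ a * Ltil θhat + ε := by gcongr; exact hLhat θhat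
    _ ≤ a * Ltil θstar + ε := by gcongr; exact hmin θstar hθstar
    _ ≤ a * (b * Lhat θstar) + ε := by gcongr; exact hLtil θstar
    _ ≤ a * (b * ε) + ε := by gcongr
    _ = (1 + a * b) * ε := by ring

theorem stmt16_general (d : ℕ) (hd : 0 < d) (Sig Sighat A Ahat : Matrix (Fin d) (Fin d) ℝ)
    (hSig : Sig.PosDef) (hSighat : Sighat.PosDef) (b bhat : Fin d → ℝ)
    (Θ : Set (Fin d → ℝ)) (θstar : Fin d → ℝ) (hθstar : θstar ∈ Θ)
    (hAθ : A *ᵥ θstar = b) (ε : ℝ)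
    (hconc : ∀ θ ∈ Θ,
      |norm2 ((psdSqrt Sig)⁻¹ *ᵥ (A *ᵥ θ - b)) -
          norm2 ((psdSqrt Sig)⁻¹ *ᵥ (Ahat *ᵥ θ - bhat))| ≤ ε)
    (θhat : Fin d → ℝ) (hθhat : θhat ∈ Θ)
    (hmin : ∀ θ ∈ Θ,
      norm2 ((psdSqrt Sighat)⁻¹ *ᵥ (Ahat *ᵥ θhat - bhat)) ≤
        norm2 ((psdSqrt Sighat)⁻¹ *ᵥ (Ahat *ᵥ θ - bhat))) :
    norm2 ((psdSqrt Sig)⁻¹ *ᵥ (A *ᵥ θhat - b)) ≤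
      (1 + Real.sqrt (lamMax ((psdSqrt Sig)⁻¹ * Sighat * (psdSqrt Sig)⁻¹) /
          lamMin ((psdSqrt Sig)⁻¹ * Sighat * (psdSqrt Sig)⁻¹))) * ε := by
  have hLθstar : norm2 ((psdSqrt Sig)⁻¹ *ᵥ (A *ᵥ θstar - b)) = 0 := by
    simp [hAθ, norm2]
  have hsqrt : √(lamMax (whitenedCov Sig Sighat) / lamMin (whitenedCov Sig Sighat)) =
      √(lamMax (whitenedCov Sig Sighat)) * √(lamMin (whitenedCov Sig Sighat))⁻¹ := by
    rw [div_eq_mul_inv, Real.sqrt_mul (lamMax_pos hd (whitenedCov_posDef hSig hSighat)).le]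
  rw [← whitenedCov, hsqrt]
  exact oracle_inequality (L := fun θ => norm2 ((psdSqrt Sig)⁻¹ *ᵥ (A *ᵥ θ - b)))
    (Lhat := fun θ => norm2 ((psdSqrt Sig)⁻¹ *ᵥ (Ahat *ᵥ θ - bhat)))
    (Ltil := fun θ => norm2 ((psdSqrt Sighat)⁻¹ *ᵥ (Ahat *ᵥ θ - bhat)))
    (Real.sqrt_nonneg _) (Real.sqrt_nonneg _) hθstar hLθstar hconc hθhat hmin
    (fun θ => norm2_inv_psdSqrt_mulVec_le_sqrt_lamMax_mul hd hSig hSighat _)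
    (fun θ => norm2_inv_psdSqrt_mulVec_le_sqrt_inv_lamMin_mul hd hSig hSighat _)

/-- (deterministic oracle inequality in the proof of Theorem E.1 of the
paper) for the loss-minimization variant of LSTDQ. -/
theorem stmt16 (d : ℕ) (hd : 0 < d) (Sig Sighat A Ahat : Matrix (Fin d) (Fin d) ℝ)
    (hSig : Sig.PosDef) (hSighat : Sighat.PosDef) (b bhat : Fin d → ℝ)
    (Θ : Set (Fin d → ℝ)) (θstar : Fin d → ℝ) (hθstar : θstar ∈ Θ)
    (hAθ : A *ᵥ θstar = b) (ε : ℝ) (hε : 0 ≤ ε)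
    (hconc : ∀ θ ∈ Θ,
      |norm2 ((psdSqrt Sig)⁻¹ *ᵥ (A *ᵥ θ - b)) -
          norm2 ((psdSqrt Sig)⁻¹ *ᵥ (Ahat *ᵥ θ - bhat))| ≤ ε)
    (θhat : Fin d → ℝ) (hθhat : θhat ∈ Θ)
    (hmin : ∀ θ ∈ Θ,
      norm2 ((psdSqrt Sighat)⁻¹ *ᵥ (Ahat *ᵥ θhat - bhat)) ≤
        norm2 ((psdSqrt Sighat)⁻¹ *ᵥ (Ahat *ᵥ θ - bhat))) :
    norm2 ((psdSqrt Sig)⁻¹ *ᵥ (A *ᵥ θhat - b)) ≤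
      (1 + Real.sqrt (lamMax ((psdSqrt Sig)⁻¹ * Sighat * (psdSqrt Sig)⁻¹) /
          lamMin ((psdSqrt Sig)⁻¹ * Sighat * (psdSqrt Sig)⁻¹))) * ε :=
  stmt16_general d hd Sig Sighat A Ahat hSig hSighat b bhat Θ θstar hθstar hAθ ε hconc θhat hθhat
    hmin

end
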